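/- arXiv:0901.4036 — 3 statements merged into one kernel-verified Lean document; each statement's English description precedes it below -/
import Mathlib

section
/- For all indices 1 ≤ j ≤ i ≤ m, the Abaffian matrix H_{i+1} annihilates the earlier rows of A: H_{i+1} a_j = 0. -/
/-!
The update `H ↦ H - (wᵀHa)⁻¹ (Ha)(wᵀH)` subtracts from `Hx` a multiple of `Ha` proportional to
`wᵀHx`, normalised to cancel `Ha` exactly. So it kills `a`, and it keeps killing everything `H`
already kills; induction on `i` starting at `i = j` finishes.
-/

open Matrix

namespace Matrix

variable {K ι : Type*} [Field K] [Fintype ι]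

def abaffianUpdate (H : Matrix ι ι K) (a w : ι → K) : Matrix ι ι K :=
  H - (w ⬝ᵥ H *ᵥ a)⁻¹ • vecMulVec (H *ᵥ a) (w ᵥ* H)

theorem abaffianUpdate_mulVec (H : Matrix ι ι K) (a w x : ι → K) :
    abaffianUpdate H a w *ᵥ x = H *ᵥ x - ((w ⬝ᵥ H *ᵥ a)⁻¹ * (w ⬝ᵥ H *ᵥ x)) • H *ᵥ a := by
  rw [abaffianUpdate, sub_mulVec, smul_mulVec, vecMulVec_mulVec, op_smul_eq_smul, smul_smul,
    ← dotProduct_mulVec]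

theorem abaffianUpdate_mulVec_self {H : Matrix ι ι K} {a w : ι → K} (h : w ⬝ᵥ H *ᵥ a ≠ 0) :
    abaffianUpdate H a w *ᵥ a = 0 := by
  rw [abaffianUpdate_mulVec, inv_mul_cancel₀ h, one_smul, sub_self]

theorem abaffianUpdate_mulVec_of_mulVec_eq_zero {H : Matrix ι ι K} (a w : ι → K) {x : ι → K}
    (hx : H *ᵥ x = 0) : abaffianUpdate H a w *ᵥ x = 0 := by
  rw [abaffianUpdate_mulVec, hx, dotProduct_zero, mul_zero, zero_smul, sub_zero]

end Matrix

theorem abs_abaffian_annihilates_general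
    (m n : ℕ)
    (a w : ℕ → (Fin n → ℝ))
    (H : ℕ → Matrix (Fin n) (Fin n) ℝ)
    (hw : ∀ i, 1 ≤ i → i ≤ m → w i ⬝ᵥ (H i).mulVec (a i) ≠ 0)
    (hrec : ∀ i, 1 ≤ i → i ≤ m →
      H (i + 1) = H i - (w i ⬝ᵥ (H i).mulVec (a i))⁻¹ •
        Matrix.vecMulVec ((H i).mulVec (a i)) (Matrix.vecMul (w i) (H i))) :
    ∀ i j, 1 ≤ j → j ≤ i → i ≤ m → (H (i + 1)).mulVec (a j) = 0 := by
  intro i j hj hji him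
  induction i, hji using Nat.le_induction with
  | base =>
    rw [hrec j hj him]
    exact abaffianUpdate_mulVec_self (hw j hj him)
  | succ i hji ih =>
    rw [hrec (i + 1) (by omega) him]
    exact abaffianUpdate_mulVec_of_mulVec_eq_zero _ _ (ih (by omega))

/-- **ABS algorithm, annihilation property.**
For all indices `1 ≤ j ≤ i ≤ m`, the Abaffian matrix `H (i+1)` annihilates
the earlier rows of `A`: `H (i+1) *ᵥ a j = 0`. -/
theorem abs_abaffian_annihilates
    (m n : ℕ) (hm : 0 < m) (hmn : m ≤ n)
    (a z w p : ℕ → (Fin n → ℝ))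
    (H : ℕ → Matrix (Fin n) (Fin n) ℝ)
    (hH1 : IsUnit (H 1))
    (hz : ∀ i, 1 ≤ i → i ≤ m → z i ⬝ᵥ (H i).mulVec (a i) ≠ 0)
    (hw : ∀ i, 1 ≤ i → i ≤ m → w i ⬝ᵥ (H i).mulVec (a i) ≠ 0)
    (hrec : ∀ i, 1 ≤ i → i ≤ m →
      H (i + 1) = H i - (w i ⬝ᵥ (H i).mulVec (a i))⁻¹ •
        Matrix.vecMulVec ((H i).mulVec (a i)) (Matrix.vecMul (w i) (H i)))
    (hp : ∀ i, 1 ≤ i → i ≤ m → p i = Matrix.mulVec (H i)ᵀ (z i)) :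
    ∀ i j, 1 ≤ j → j ≤ i → i ≤ m → (H (i + 1)).mulVec (a j) = 0 :=
  abs_abaffian_annihilates_general m n a w H hw hrec
end

section
/- For all indices 1 ≤ i < j ≤ m, the search vectors satisfy the orthogonality relation a_iᵀ p_j = 0. -/
open Matrix

/-! The Abaffian update `H ↦ H - (wᵀ H a)⁻¹ (H a)(wᵀ H)` kills `a` and keeps every vector
already in the kernel of `H`. Hence `a_i ∈ ker H_k` for all `k > i`, and
`a_iᵀ p_j = a_iᵀ H_jᵀ z_j = (H_j a_i)ᵀ z_j = 0`. -/

namespace Matrix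

variable {K ι : Type*} [Field K] [Fintype ι]

theorem abaffianUpdate_mulVec_eq_zero {H : Matrix ι ι K} {x : ι → K} (a w : ι → K)
    (hx : H *ᵥ x = 0) : abaffianUpdate H a w *ᵥ x = 0 := by
  rw [abaffianUpdate_mulVec, hx, dotProduct_zero, mul_zero, zero_smul, sub_zero]

end Matrix

theorem abs_search_vector_orthogonality_general
    (m n : ℕ)
    (a z w p : ℕ → (Fin n → ℝ))
    (H : ℕ → Matrix (Fin n) (Fin n) ℝ)
    (hw : ∀ i, 1 ≤ i → i ≤ m → w i ⬝ᵥ (H i).mulVec (a i) ≠ 0)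
    (hrec : ∀ i, 1 ≤ i → i ≤ m →
      H (i + 1) = H i - (w i ⬝ᵥ (H i).mulVec (a i))⁻¹ •
        Matrix.vecMulVec ((H i).mulVec (a i)) (Matrix.vecMul (w i) (H i)))
    (hp : ∀ i, 1 ≤ i → i ≤ m → p i = Matrix.mulVec (H i)ᵀ (z i)) :
    ∀ i j, 1 ≤ i → i < j → j ≤ m → a i ⬝ᵥ p j = 0 := by
  intro i j hi hij hjm
  have hstep : ∀ k, 1 ≤ k → k ≤ m → H (k + 1) = abaffianUpdate (H k) (a k) (w k) := hrec
  have hker : ∀ k, i + 1 ≤ k → k ≤ m → H k *ᵥ a i = 0 := by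
    intro k hik
    induction k, hik using Nat.le_induction with
    | base =>
      intro _
      rw [hstep i hi (by omega)]
      exact abaffianUpdate_mulVec_self (hw i hi (by omega))
    | succ k hik ih =>
      intro hkm
      rw [hstep k (by omega) (by omega)]
      exact abaffianUpdate_mulVec_eq_zero _ _ (ih (by omega))
  rw [hp j (by omega) hjm, dotProduct_mulVec, vecMul_transpose, hker j hij hjm, zero_dotProduct]

theorem abs_search_vector_orthogonality
    (m n : ℕ) (hm : 0 < m) (hmn : m ≤ n)
    (a z w p : ℕ → (Fin n → ℝ))
    (H : ℕ → Matrix (Fin n) (Fin n) ℝ)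
    (hH1 : IsUnit (H 1))
    (hz : ∀ i, 1 ≤ i → i ≤ m → z i ⬝ᵥ (H i).mulVec (a i) ≠ 0)
    (hw : ∀ i, 1 ≤ i → i ≤ m → w i ⬝ᵥ (H i).mulVec (a i) ≠ 0)
    (hrec : ∀ i, 1 ≤ i → i ≤ m →
      H (i + 1) = H i - (w i ⬝ᵥ (H i).mulVec (a i))⁻¹ •
        Matrix.vecMulVec ((H i).mulVec (a i)) (Matrix.vecMul (w i) (H i)))
    (hp : ∀ i, 1 ≤ i → i ≤ m → p i = Matrix.mulVec (H i)ᵀ (z i)) :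
    ∀ i j, 1 ≤ i → i < j → j ≤ m → a i ⬝ᵥ p j = 0 :=
  abs_search_vector_orthogonality_general m n a z w p H hw hrec hp
end

section
/- Implicit factorization property: for each 1 ≤ i ≤ m, the i × i matrix L_i whose (k, j) entry is a_kᵀ p_j is lower triangular (its entries vanish for k < j) and all its diagonal entries a_jᵀ p_j = z_jᵀ H_j a_j are nonzero; consequently L_i is nonsingular. Equivalently, writing A_i = (a₁, …, a_i)ᵀ and P_i = (p₁, …, p_i), one has A_i P_i = L_i with L_i nonsingular lower triangular. -/
/-!
The update `H ↦ H - (wᵀHa)⁻¹ (Ha)(wᵀH)` sends `a` to zero and keeps every vector of the kernel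
of `H` in the kernel, so inductively `H_j a_k = 0` for `k < j`. Since
`a_kᵀ p_j = a_kᵀ H_jᵀ z_j = z_jᵀ H_j a_k`, the matrix `(a_kᵀ p_j)` is lower triangular with
diagonal `z_jᵀ H_j a_j ≠ 0`, hence its determinant, the product of the diagonal, is nonzero.
-/

open Matrix

namespace Matrix

variable {ι K : Type*} [Fintype ι] [Field K]

/-- The paper's recursion reads `H_{i+1} = abaffUpdate H_i a_i w_i`. -/
def abaffUpdate (H : Matrix ι ι K) (a w : ι → K) : Matrix ι ι K :=
  H - (w ⬝ᵥ H *ᵥ a)⁻¹ • vecMulVec (H *ᵥ a) (w ᵥ* H)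

theorem abaffUpdate_mulVec (H : Matrix ι ι K) (a w x : ι → K) :
    abaffUpdate H a w *ᵥ x = H *ᵥ x - ((w ⬝ᵥ H *ᵥ a)⁻¹ * (w ⬝ᵥ H *ᵥ x)) • H *ᵥ a := by
  rw [abaffUpdate, sub_mulVec, smul_mulVec, vecMulVec_mulVec, ← dotProduct_mulVec, op_smul_eq_smul,
    smul_smul]

theorem abaffUpdate_mulVec_self {H : Matrix ι ι K} {a w : ι → K} (h : w ⬝ᵥ H *ᵥ a ≠ 0) :
    abaffUpdate H a w *ᵥ a = 0 := by
  rw [abaffUpdate_mulVec, inv_mul_cancel₀ h, one_smul, sub_self]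

theorem abaffUpdate_mulVec_of_mulVec_eq_zero {H : Matrix ι ι K} (a w : ι → K) {x : ι → K}
    (hx : H *ᵥ x = 0) : abaffUpdate H a w *ᵥ x = 0 := by
  rw [abaffUpdate_mulVec, hx, dotProduct_zero, mul_zero, zero_smul, sub_zero]

theorem abaffian_mulVec_eq_zero_of_lt {H : ℕ → Matrix ι ι K} {a w : ℕ → ι → K} {m : ℕ}
    (hw : ∀ i, 1 ≤ i → i ≤ m → w i ⬝ᵥ H i *ᵥ a i ≠ 0)
    (hrec : ∀ i, 1 ≤ i → i ≤ m → H (i + 1) = abaffUpdate (H i) (a i) (w i))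
    {k j : ℕ} (hk : 1 ≤ k) (hkj : k < j) (hjm : j ≤ m) : H j *ᵥ a k = 0 := by
  induction j, hkj using Nat.le_induction with
  | base =>
    rw [hrec k hk (by omega)]
    exact abaffUpdate_mulVec_self (hw k hk (by omega))
  | succ j hkj ih =>
    rw [hrec j (by omega) (by omega)]
    exact abaffUpdate_mulVec_of_mulVec_eq_zero _ _ (ih (by omega))

theorem isUnit_of_isLowerTriangular [LinearOrder ι] {L : Matrix ι ι K}
    (hL : L.IsLowerTriangular) (hdiag : ∀ j, L j j ≠ 0) : IsUnit L := by
  rw [isUnit_iff_isUnit_det, det_of_isLowerTriangular L hL, isUnit_iff_ne_zero,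
    Finset.prod_ne_zero_iff]
  exact fun j _ => hdiag j

end Matrix

theorem abs_implicit_factorization_general
    (m n : ℕ)
    (a z w p : ℕ → (Fin n → ℝ))
    (H : ℕ → Matrix (Fin n) (Fin n) ℝ)
    (hz : ∀ i, 1 ≤ i → i ≤ m → z i ⬝ᵥ (H i).mulVec (a i) ≠ 0)
    (hw : ∀ i, 1 ≤ i → i ≤ m → w i ⬝ᵥ (H i).mulVec (a i) ≠ 0)
    (hrec : ∀ i, 1 ≤ i → i ≤ m →
      H (i + 1) = H i - (w i ⬝ᵥ (H i).mulVec (a i))⁻¹ •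
        Matrix.vecMulVec ((H i).mulVec (a i)) (Matrix.vecMul (w i) (H i)))
    (hp : ∀ i, 1 ≤ i → i ≤ m → p i = Matrix.mulVec (H i)ᵀ (z i)) :
    ∀ i, 1 ≤ i → i ≤ m →
      ∀ L : Matrix (Fin i) (Fin i) ℝ,
        L = Matrix.of (fun k j : Fin i => a (k.1 + 1) ⬝ᵥ p (j.1 + 1)) →
        (∀ k j : Fin i, (k : ℕ) < (j : ℕ) → L k j = 0) ∧
        (∀ j : Fin i,
          L j j = z (j.1 + 1) ⬝ᵥ (H (j.1 + 1)).mulVec (a (j.1 + 1)) ∧ L j j ≠ 0) ∧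
        IsUnit L := by
  intro i _ him L hL
  have entry (k j : Fin i) : L k j = z (j + 1) ⬝ᵥ H (j + 1) *ᵥ a (k + 1) := by
    rw [hL, of_apply, hp _ (by omega) (by omega), dotProduct_transpose_mulVec]
  have upper_zero (k j : Fin i) (hkj : (k : ℕ) < j) : L k j = 0 := by
    rw [entry, abaffian_mulVec_eq_zero_of_lt hw hrec (by omega) (by omega) (by omega),
      dotProduct_zero]
  have diag (j : Fin i) : L j j = z (j + 1) ⬝ᵥ H (j + 1) *ᵥ a (j + 1) ∧ L j j ≠ 0 :=
    ⟨entry j j, entry j j ▸ hz _ (by omega) (by omega)⟩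
  exact ⟨upper_zero, diag,
    isUnit_of_isLowerTriangular upper_zero fun j => (diag j).2⟩

theorem abs_implicit_factorization
    (m n : ℕ) (hm : 0 < m) (hmn : m ≤ n)
    (a z w p : ℕ → (Fin n → ℝ))
    (H : ℕ → Matrix (Fin n) (Fin n) ℝ)
    (hH1 : IsUnit (H 1))
    (hz : ∀ i, 1 ≤ i → i ≤ m → z i ⬝ᵥ (H i).mulVec (a i) ≠ 0)
    (hw : ∀ i, 1 ≤ i → i ≤ m → w i ⬝ᵥ (H i).mulVec (a i) ≠ 0)
    (hrec : ∀ i, 1 ≤ i → i ≤ m →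
      H (i + 1) = H i - (w i ⬝ᵥ (H i).mulVec (a i))⁻¹ •
        Matrix.vecMulVec ((H i).mulVec (a i)) (Matrix.vecMul (w i) (H i)))
    (hp : ∀ i, 1 ≤ i → i ≤ m → p i = Matrix.mulVec (H i)ᵀ (z i)) :
    ∀ i, 1 ≤ i → i ≤ m →
      ∀ L : Matrix (Fin i) (Fin i) ℝ,
        L = Matrix.of (fun k j : Fin i => a (k.1 + 1) ⬝ᵥ p (j.1 + 1)) →
        (∀ k j : Fin i, (k : ℕ) < (j : ℕ) → L k j = 0) ∧
        (∀ j : Fin i,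
          L j j = z (j.1 + 1) ⬝ᵥ (H (j.1 + 1)).mulVec (a (j.1 + 1)) ∧ L j j ≠ 0) ∧
        IsUnit L :=
  abs_implicit_factorization_general m n a z w p H hz hw hrec hp
end
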